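/- Let C and D be triangulated categories equipped with t-structures (written homologically, with connective parts C_{≥n}, D_{≥n} and coconnective parts C_{≤n}, D_{≤n}), and let F : C → D be an exact (triangulated) functor commuting with shifts. Assume: (i) F has finite cohomological dimension, i.e. there exists an integer N such that F(X) ∈ D_{≥ −N} for every X ∈ C_{≥ 0}; (ii) F vanishes on bounded above objects, i.e. F(X) ≅ 0 whenever X ∈ C_{≤ n} for some integer n; (iii) the t-structure on D is non-degenerate, i.e. any object of D lying in D_{≥ n} for every integer n is a zero object. Then F(E) ≅ 0 for every object E of C. -/

import Mathlib

open CategoryTheory Limits Triangulated Pretriangulated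

universe v₁ v₂ u₁ u₂

/-!
For every `m`, truncating `E` gives a distinguished triangle `τ_{≥m} E → E → τ_{<m} E → ⋯`.
Its third vertex is bounded above, so `F` kills it and `F E ≅ F (τ_{≥m} E)`, which lies in
`D_{≥ m - N}` by finite cohomological dimension. As `m` is arbitrary, `F E` lies in every
`D_{≥ n}` and vanishes by non-degeneracy.
-/

namespace CategoryTheory

variable {C : Type u₁} {D : Type u₂} [Category.{v₁} C] [Category.{v₂} D]
  [Preadditive C] [Preadditive D] [HasZeroObject C] [HasZeroObject D]
  [HasShift C ℤ] [HasShift D ℤ]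
  [∀ n : ℤ, (shiftFunctor C n).Additive] [∀ n : ℤ, (shiftFunctor D n).Additive]
  [Pretriangulated C] [Pretriangulated D]

lemma Functor.isIso_map_mor₁_of_isZero_obj₃ (F : C ⥤ D) [F.CommShift ℤ] [F.IsTriangulated]
    {T : Triangle C} (hT : T ∈ distTriang C) (h₃ : IsZero (F.obj T.obj₃)) :
    IsIso (F.map T.mor₁) :=
  (Triangle.isZero₃_iff_isIso₁ _ (F.map_distinguished T hT)).1 h₃

lemma Triangulated.TStructure.le_map_obj_of_le (tC : TStructure C) {tD : TStructure D}
    {F : C ⥤ D} [F.CommShift ℤ] {N : ℤ} (hN : ∀ X : C, tC.le 0 X → tD.le N (F.obj X))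
    {a n : ℤ} (han : a + N = n) {X : C} (hX : tC.le a X) : tD.le n (F.obj X) := by
  have hFX : tD.le N ((F.obj X)⟦a⟧) :=
    (tD.le N).prop_of_iso ((F.commShiftIso a).app X) (hN _ (tC.le_shift a a 0 (by lia) X hX))
  rw [← tD.shift_le a N n han]
  exact hFX

end CategoryTheory

/-- Let `C`, `D` be triangulated categories with t-structures (written homologically:
for a t-structure `t`, the homological connective part `C_{≥ n}` is `t.LE (-n)` and the
homological coconnective part `C_{≤ n}` is `t.GE (-n)`), and let `F : C ⥤ D` be an exact
(triangulated) functor commuting with shifts. If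
(i) `F` has finite cohomological dimension, i.e. there is an integer `N` with
    `F(C_{≥0}) ⊆ D_{≥ -N}`;
(ii) `F` vanishes on all bounded above objects; and
(iii) the t-structure on `D` is non-degenerate (any object lying in `D_{≥ n}` for all `n`
     is zero),
then `F` vanishes on every object of `C`. -/
theorem vanishing_of_finite_cohomological_dimension
    {C : Type u₁} {D : Type u₂} [Category.{v₁} C] [Category.{v₂} D]
    [Preadditive C] [Preadditive D] [HasZeroObject C] [HasZeroObject D]
    [HasShift C ℤ] [HasShift D ℤ]
    [∀ (n : ℤ), (shiftFunctor C n).Additive] [∀ (n : ℤ), (shiftFunctor D n).Additive]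
    [Pretriangulated C] [Pretriangulated D]
    (tC : TStructure C) (tD : TStructure D)
    (F : C ⥤ D) [F.CommShift ℤ] [F.IsTriangulated]
    (hfin : ∃ N : ℤ, ∀ X : C, tC.le 0 X → tD.le N (F.obj X))
    (hbdd : ∀ X : C, (∃ n : ℤ, tC.ge n X) → IsZero (F.obj X))
    (hnondeg : ∀ Y : D, (∀ n : ℤ, tD.le n Y) → IsZero Y) :
    ∀ E : C, IsZero (F.obj E) := by
  obtain ⟨N, hN⟩ := hfin
  intro E
  refine hnondeg _ fun n => ?_
  obtain ⟨X, Y, hX, hY, f, g, h, hT⟩ := tC.exists_triangle E (n - N) (n - N + 1) rfl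
  have : IsIso (F.map f) := F.isIso_map_mor₁_of_isZero_obj₃ hT (hbdd Y ⟨_, hY⟩)
  exact (tD.le n).prop_of_iso (asIso (F.map f)) (tC.le_map_obj_of_le hN (sub_add_cancel n N) hX)
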